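/- Existence of a zero from the quantitative inverse function theorem: Let X and Y be Banach spaces, U ⊆ X open, and f : X → Y continuously Fréchet differentiable on U. Let x₀ ∈ U, y₀ = f(x₀), and η, σ, L > 0 satisfy: ‖y₀‖_Y < η; δf(x₀) is an invertible bounded linear map with ‖δf(x₀)⁻¹‖ < σ; B_{2ησ}(x₀) ⊆ U; δf is Lipschitz continuous on B_{2ησ}(x₀) with Lipschitz constant L; and 2Lησ² < 1. Then there exists x̄ ∈ X with f(x̄) = 0 and ‖x₀ − x̄‖_X < 2ησ. -/

import Mathlib

/-!
The zero is the fixed point of the simplified Newton map `g x = x - A (f x)`, where `A` inverts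
the derivative at `x₀`. Since `δf` is `L`-Lipschitz, the first-order Taylor remainder at `x₀` is at
most `L/2 ‖x - x₀‖²` and `f - δf(x₀)` is `L r`-Lipschitz on `B̄_r(x₀)`. Hence `g` maps `B̄_r(x₀)` into
itself once `σ (L/2 r² + η) ≤ r`, and contracts it with constant `σ L r`. The smaller root `r` of
`σL/2 r² - r + ση` exists because `2Lησ² < 1`, lies below `2ησ`, and gives `σ L r < 1`; Banach's
fixed point theorem concludes.
-/

open Metric Set

theorem exists_pos_lt_two_mul_eq_of_four_mul_lt_one {a c : ℝ} (ha : 0 ≤ a) (hc : 0 < c)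
    (h : 4 * a * c < 1) : ∃ r, 0 < r ∧ r < 2 * c ∧ a * r ^ 2 + c = r ∧ 2 * a * r < 1 := by
  obtain ⟨s, hs0, hs_sq⟩ : ∃ s : ℝ, 0 < s ∧ s ^ 2 = 1 - 4 * a * c :=
    ⟨√(1 - 4 * a * c), Real.sqrt_pos.2 (by linarith), Real.sq_sqrt (by linarith)⟩
  -- `2c / (1 + s) = (1 - s) / (2a)` is the smaller root of `a r² - r + c`
  have hr0 : 0 < 2 * c / (1 + s) := by positivity
  have hroot : a * (2 * c / (1 + s)) ^ 2 + c = 2 * c / (1 + s) := by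
    field_simp
    linear_combination hs_sq
  have hr2c : 2 * c / (1 + s) < 2 * c := div_lt_self (by positivity) (by linarith)
  refine ⟨_, hr0, hr2c, hroot, ?_⟩
  nlinarith

theorem Convex.norm_image_sub_sub_fderiv_le_of_lipschitz {E F : Type*} [NormedAddCommGroup E]
    [NormedSpace ℝ E] [NormedAddCommGroup F] [NormedSpace ℝ F] {f : E → F} {f' : E → E →L[ℝ] F}
    {s : Set E} (hs : Convex ℝ s) (hf : ∀ x ∈ s, HasFDerivWithinAt f (f' x) s x) {L : ℝ}
    {x₀ x : E} (hx₀ : x₀ ∈ s) (hx : x ∈ s) (hL : ∀ z ∈ s, ‖f' z - f' x₀‖ ≤ L * ‖z - x₀‖) :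
    ‖f x - f x₀ - f' x₀ (x - x₀)‖ ≤ L / 2 * ‖x - x₀‖ ^ 2 := by
  set v := x - x₀
  set γ : ℝ → E := fun τ => x₀ + τ • v
  have hγs : MapsTo γ (Icc 0 1) s := fun τ hτ => hs.add_smul_sub_mem hx₀ hx hτ
  set φ : ℝ → F := fun τ => f (γ τ) - f x₀ - τ • f' x₀ v
  have hφ : ∀ τ ∈ Icc (0 : ℝ) 1, HasDerivWithinAt φ (f' (γ τ) v - f' x₀ v) (Icc 0 1) τ := by
    intro τ hτ
    have hγ : HasDerivWithinAt γ v (Icc 0 1) τ :=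
      (((hasDerivAt_id τ).smul_const v).const_add x₀).hasDerivWithinAt.congr_deriv (one_smul ℝ v)
    exact (((hf _ (hγs hτ)).comp_hasDerivWithinAt τ hγ hγs).sub_const _).sub
      (((hasDerivAt_id τ).smul_const _).hasDerivWithinAt.congr_deriv (one_smul ℝ _))
  have hbound : ∀ τ ∈ Ico (0 : ℝ) 1, ‖f' (γ τ) v - f' x₀ v‖ ≤ L * ‖v‖ ^ 2 * τ := by
    intro τ hτ
    have hγτ : ‖γ τ - x₀‖ = τ * ‖v‖ := by
      simp [γ, norm_smul, abs_of_nonneg hτ.1]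
    calc ‖f' (γ τ) v - f' x₀ v‖ = ‖(f' (γ τ) - f' x₀) v‖ := rfl
      _ ≤ ‖f' (γ τ) - f' x₀‖ * ‖v‖ := (f' (γ τ) - f' x₀).le_opNorm v
      _ ≤ L * ‖γ τ - x₀‖ * ‖v‖ := by gcongr; exact hL _ (hγs (Ico_subset_Icc_self hτ))
      _ = L * ‖v‖ ^ 2 * τ := by rw [hγτ]; ring
  have hB : ∀ τ, HasDerivAt (fun τ : ℝ => L * ‖v‖ ^ 2 * (τ ^ 2 / 2)) (L * ‖v‖ ^ 2 * τ) τ := by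
    intro τ
    simpa using ((hasDerivAt_pow 2 τ).div_const 2).const_mul (L * ‖v‖ ^ 2)
  have hfence := image_norm_le_of_norm_deriv_right_le_deriv_boundary
    (fun τ hτ => (hφ τ hτ).continuousWithinAt)
    (fun τ hτ => (hφ τ (Ico_subset_Icc_self hτ)).mono_of_mem_nhdsWithin (Icc_mem_nhdsGE_of_mem hτ))
    (by simp [φ, γ]) hB hbound (right_mem_Icc.2 zero_le_one)
  convert hfence using 1
  · simp [φ, γ, v]
  · ring

theorem Convex.approximatesLinearOn_of_norm_sub_le {E F : Type*} [NormedAddCommGroup E]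
    [NormedSpace ℝ E] [NormedAddCommGroup F] [NormedSpace ℝ F] {f : E → F} {f' : E → E →L[ℝ] F}
    {s : Set E} (hs : Convex ℝ s) (hf : ∀ x ∈ s, HasFDerivWithinAt f (f' x) s x)
    {T : E →L[ℝ] F} {c : NNReal} (hc : ∀ z ∈ s, ‖f' z - T‖ ≤ c) :
    ApproximatesLinearOn f T s c := fun _ hx _ hy =>
  hs.norm_image_sub_le_of_norm_hasFDerivWithin_le' hf hc hy hx

section SimplifiedNewton

variable {X Y : Type*} [NormedAddCommGroup X] [NormedSpace ℝ X]
  [NormedAddCommGroup Y] [NormedSpace ℝ Y]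

def simplifiedNewtonMap (A : Y →L[ℝ] X) (f : X → Y) (x : X) : X := x - A (f x)

variable {A : Y →L[ℝ] X} {T : X →L[ℝ] Y} {f : X → Y}

theorem simplifiedNewtonMap_eq (hA : ∀ x, A (T x) = x) (x : X) :
    simplifiedNewtonMap A f x = -A ((f - T) x) := by
  simp only [simplifiedNewtonMap, Pi.sub_apply, map_sub, neg_sub, hA]

theorem eq_zero_of_simplifiedNewtonMap_eq_self (hA : ∀ y, T (A y) = y) {x : X}
    (hx : simplifiedNewtonMap A f x = x) : f x = 0 := by
  rw [← hA (f x), sub_eq_self.1 hx, map_zero]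

theorem ApproximatesLinearOn.lipschitzOnWith_simplifiedNewtonMap (hA : ∀ x, A (T x) = x)
    {s : Set X} {c : NNReal} (hf : ApproximatesLinearOn f T s c) :
    LipschitzOnWith (‖A‖₊ * c) (simplifiedNewtonMap A f) s := by
  rw [funext (simplifiedNewtonMap_eq (f := f) hA)]
  exact (A.lipschitz.comp_lipschitzOnWith hf.lipschitzOnWith).neg

theorem norm_simplifiedNewtonMap_sub_le (hA : ∀ x, A (T x) = x) (x₀ x : X) :
    ‖simplifiedNewtonMap A f x - x₀‖ ≤ ‖A‖ * (‖f x - f x₀ - T (x - x₀)‖ + ‖f x₀‖) := by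
  have : simplifiedNewtonMap A f x - x₀ = -A (f x - f x₀ - T (x - x₀) + f x₀) := by
    rw [simplifiedNewtonMap_eq hA]
    conv_lhs => rw [← hA x₀]
    simp only [Pi.sub_apply, map_sub, map_add]
    abel
  rw [this, norm_neg]
  exact A.le_opNorm_of_le (norm_add_le _ _)

theorem exists_eq_zero_mem_closedBall_of_approximatesLinearOn [CompleteSpace X]
    (hA₁ : ∀ x, A (T x) = x) (hA₂ : ∀ y, T (A y) = y) {x₀ : X} {r M : ℝ} (hr : 0 ≤ r)
    {c : NNReal} (hf : ApproximatesLinearOn f T (closedBall x₀ r) c) (hc : ‖A‖ * c < 1)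
    (hM : ∀ x ∈ closedBall x₀ r, ‖f x - f x₀ - T (x - x₀)‖ ≤ M)
    (hMr : ‖A‖ * (M + ‖f x₀‖) ≤ r) :
    ∃ x ∈ closedBall x₀ r, f x = 0 := by
  have hself : MapsTo (simplifiedNewtonMap A f) (closedBall x₀ r) (closedBall x₀ r) :=
    fun x hx => mem_closedBall_iff_norm.2 <|
      calc ‖simplifiedNewtonMap A f x - x₀‖
          _ ≤ ‖A‖ * (‖f x - f x₀ - T (x - x₀)‖ + ‖f x₀‖) := norm_simplifiedNewtonMap_sub_le hA₁ x₀ x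
          _ ≤ ‖A‖ * (M + ‖f x₀‖) := by gcongr; exact hM x hx
          _ ≤ r := hMr
  have hcontr : ContractingWith (‖A‖₊ * c) (hself.restrict _ _ _) :=
    ⟨by rwa [← NNReal.coe_lt_coe, NNReal.coe_mul, coe_nnnorm, NNReal.coe_one],
      hself.lipschitzOnWith_iff_restrict.1 (hf.lipschitzOnWith_simplifiedNewtonMap hA₁)⟩
  obtain ⟨x, hx, hfix, -⟩ := hcontr.exists_fixedPoint' isClosed_closedBall.isComplete hself
    (mem_closedBall_self hr) (edist_ne_top _ _)
  exact ⟨x, hx, eq_zero_of_simplifiedNewtonMap_eq_self hA₂ hfix⟩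

end SimplifiedNewton

theorem exists_zero_of_quantitative_inverse_function_theorem_general
    {X Y : Type*} [NormedAddCommGroup X] [NormedSpace ℝ X] [CompleteSpace X]
    [NormedAddCommGroup Y] [NormedSpace ℝ Y] [CompleteSpace Y]
    (U : Set X)
    (f : X → Y) (f' : X → X →L[ℝ] Y)
    (hderiv : ∀ x ∈ U, HasFDerivAt f (f' x) x)
    (x₀ : X)
    (η σ L : ℝ) (hL : 0 < L)
    (hres : ‖f x₀‖ < η)
    (A : Y →L[ℝ] X)
    (hA₁ : ∀ x : X, A (f' x₀ x) = x) (hA₂ : ∀ y : Y, f' x₀ (A y) = y)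
    (hAnorm : ‖A‖ < σ)
    (hball : ball x₀ (2 * η * σ) ⊆ U)
    (hLip : ∀ u ∈ ball x₀ (2 * η * σ), ∀ v ∈ ball x₀ (2 * η * σ),
      ‖f' u - f' v‖ ≤ L * ‖u - v‖)
    (hsmall : 2 * L * η * σ ^ 2 < 1) :
    ∃ x' : X, f x' = 0 ∧ ‖x₀ - x'‖ < 2 * η * σ := by
  have hσ : 0 < σ := (norm_nonneg A).trans_lt hAnorm
  have hη : 0 < η := (norm_nonneg _).trans_lt hres
  obtain ⟨r, hr0, hr, hroot, hrL⟩ := exists_pos_lt_two_mul_eq_of_four_mul_lt_one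
    (a := σ * L / 2) (c := σ * η) (by positivity) (by positivity) (by linarith)
  have hsub : closedBall x₀ r ⊆ ball x₀ (2 * η * σ) := closedBall_subset_ball (by linarith)
  have hderiv' : ∀ x ∈ closedBall x₀ r, HasFDerivWithinAt f (f' x) (closedBall x₀ r) x :=
    fun x hx => (hderiv x (hball (hsub hx))).hasFDerivWithinAt
  have hLip₀ : ∀ z ∈ closedBall x₀ r, ‖f' z - f' x₀‖ ≤ L * ‖z - x₀‖ := fun z hz =>
    hLip z (hsub hz) x₀ (mem_ball_self (by positivity))
  obtain ⟨c, hc⟩ : ∃ c : NNReal, (c : ℝ) = L * r := ⟨⟨L * r, by positivity⟩, rfl⟩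
  have happrox : ApproximatesLinearOn f (f' x₀) (closedBall x₀ r) c :=
    (convex_closedBall x₀ r).approximatesLinearOn_of_norm_sub_le hderiv' fun z hz =>
      hc ▸ (hLip₀ z hz).trans (by gcongr; exact mem_closedBall_iff_norm.1 hz)
  have hquad : ∀ x ∈ closedBall x₀ r, ‖f x - f x₀ - f' x₀ (x - x₀)‖ ≤ L / 2 * r ^ 2 :=
    fun x hx => ((convex_closedBall x₀ r).norm_image_sub_sub_fderiv_le_of_lipschitz hderiv'
      (mem_closedBall_self hr0.le) hx hLip₀).trans (by gcongr; exact mem_closedBall_iff_norm.1 hx)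
  obtain ⟨x, hx, hfx⟩ := exists_eq_zero_mem_closedBall_of_approximatesLinearOn hA₁ hA₂ hr0.le
    happrox (by rw [hc]; nlinarith) hquad <|
      calc ‖A‖ * (L / 2 * r ^ 2 + ‖f x₀‖) ≤ σ * (L / 2 * r ^ 2 + η) := by gcongr
        _ = r := by linarith
  exact ⟨x, hfx, by rw [norm_sub_rev]; exact (mem_closedBall_iff_norm.1 hx).trans_lt (by linarith)⟩

/-- Existence of a zero from the quantitative inverse function theorem: under
quantitative bounds on the residual `‖f x₀‖ < η`, the inverse of the derivative
`‖δf(x₀)⁻¹‖ < σ`, the Lipschitz constant `L` of the derivative on `B_{2ησ}(x₀) ⊆ U`,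
and the smallness condition `2Lησ² < 1`, there exists `x̄` with `f x̄ = 0` and
`‖x₀ − x̄‖ < 2ησ`. -/
theorem exists_zero_of_quantitative_inverse_function_theorem
    {X Y : Type*} [NormedAddCommGroup X] [NormedSpace ℝ X] [CompleteSpace X]
    [NormedAddCommGroup Y] [NormedSpace ℝ Y] [CompleteSpace Y]
    (U : Set X) (hU : IsOpen U)
    (f : X → Y) (f' : X → X →L[ℝ] Y)
    (hderiv : ∀ x ∈ U, HasFDerivAt f (f' x) x)
    (hcont : ContinuousOn f' U)
    (x₀ : X) (hx₀ : x₀ ∈ U)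
    (η σ L : ℝ) (hη : 0 < η) (hσ : 0 < σ) (hL : 0 < L)
    (hres : ‖f x₀‖ < η)
    (A : Y →L[ℝ] X)
    (hA₁ : ∀ x : X, A (f' x₀ x) = x) (hA₂ : ∀ y : Y, f' x₀ (A y) = y)
    (hAnorm : ‖A‖ < σ)
    (hball : ball x₀ (2 * η * σ) ⊆ U)
    (hLip : ∀ u ∈ ball x₀ (2 * η * σ), ∀ v ∈ ball x₀ (2 * η * σ),
      ‖f' u - f' v‖ ≤ L * ‖u - v‖)
    (hsmall : 2 * L * η * σ ^ 2 < 1) :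
    ∃ x' : X, f x' = 0 ∧ ‖x₀ - x'‖ < 2 * η * σ :=
  exists_zero_of_quantitative_inverse_function_theorem_general U f f' hderiv x₀ η σ L hL hres A hA₁
    hA₂ hAnorm hball hLip hsmall
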